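/- arXiv:2207.02750 — 3 statements merged into one kernel-verified Lean document; each statement's English description precedes it below -/
import Mathlib

section
/- Let A : ℝ^d → 𝒫(ℝ^d) be maximally monotone, B : ℝ^d → ℝ^d be λ-cocoercive, and μ ∈ (0, 2λ). Define M_{A,B,μ}(x) = (1/μ)(x − J_{μA}(x − μB(x))), where J_{μA} = (I + μA)⁻¹. Then M_{A,B,μ} is ρ-cocoercive with ρ = μ(1 − μ/(4λ)). -/
open scoped RealInnerProductSpace Pointwise

set_option maxHeartbeats 1000000 in
theorem stmt_7 {d : ℕ} (A : EuclideanSpace ℝ (Fin d) → Set (EuclideanSpace ℝ (Fin d)))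
    (B J : EuclideanSpace ℝ (Fin d) → EuclideanSpace ℝ (Fin d)) (lam μ : ℝ)
    (hlam : 0 < lam) (hμ : 0 < μ) (hμ2 : μ < 2 * lam)
    (hmono : ∀ x y u v, u ∈ A x → v ∈ A y → 0 ≤ ⟪u - v, x - y⟫)
    (hmax : ∀ x u, (∀ y v, v ∈ A y → 0 ≤ ⟪u - v, x - y⟫) → u ∈ A x)
    -- J is the resolvent (I + μA)⁻¹ : for every z, z - J z ∈ μ • A (J z)
    (hJ : ∀ z : EuclideanSpace ℝ (Fin d), z - J z ∈ μ • A (J z))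
    (hB : ∀ x y, lam * ‖B x - B y‖ ^ 2 ≤ ⟪B x - B y, x - y⟫) :
    ∀ x y, (μ * (1 - μ / (4 * lam))) *
        ‖(μ⁻¹ • (x - J (x - μ • B x))) - (μ⁻¹ • (y - J (y - μ • B y)))‖ ^ 2 ≤
      ⟪(μ⁻¹ • (x - J (x - μ • B x))) - (μ⁻¹ • (y - J (y - μ • B y))), x - y⟫ := by
  intro x y
  have hμ' : μ ≠ 0 := ne_of_gt hμ
  set px := J (x - μ • B x) with hpx
  set py := J (y - μ • B y) with hpy
  set m : EuclideanSpace ℝ (Fin d) := (x - px) - (y - py) with hm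
  set b : EuclideanSpace ℝ (Fin d) := B x - B y with hbdef
  set w : EuclideanSpace ℝ (Fin d) := x - y with hw
  obtain ⟨a, haA, haeq⟩ := Set.mem_smul_set.mp (hJ (x - μ • B x))
  obtain ⟨a', haA', haeq'⟩ := Set.mem_smul_set.mp (hJ (y - μ • B y))
  have ha : a = μ⁻¹ • ((x - μ • B x) - px) := by
    rw [← haeq, inv_smul_smul₀ hμ']
  have ha' : a' = μ⁻¹ • ((y - μ • B y) - py) := by
    rw [← haeq', inv_smul_smul₀ hμ']
  have hdiff : a - a' = μ⁻¹ • (m - μ • b) := by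
    rw [ha, ha', hm, hbdef]
    module
  have hp : px - py = w - m := by
    rw [hm, hw]; abel
  have hmono' : (0:ℝ) ≤ ⟪a - a', px - py⟫ := hmono px py a a' haA haA'
  rw [hdiff, hp, real_inner_smul_left] at hmono'
  have h1 : (0:ℝ) ≤ ⟪m - μ • b, w - m⟫ := by
    have hinv : (0:ℝ) < μ⁻¹ := inv_pos.mpr hμ
    nlinarith [hmono']
  have h1' : (0:ℝ) ≤ ⟪m, w⟫ - ‖m‖^2 - μ * ⟪b, w⟫ + μ * ⟪b, m⟫ := by
    have hexp : ⟪m - μ • b, w - m⟫ = ⟪m, w⟫ - ‖m‖^2 - μ * ⟪b, w⟫ + μ * ⟪b, m⟫ := by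
      simp only [inner_sub_left, inner_sub_right, real_inner_smul_left,
        real_inner_self_eq_norm_sq]
      rw [real_inner_comm w m, real_inner_comm w b, real_inner_comm m b]
      ring
    linarith [hexp ▸ h1]
  have h2 : lam * ‖b‖^2 ≤ ⟪b, w⟫ := hB x y
  have h3 : (0:ℝ) ≤ 4*lam^2*‖b‖^2 - 4*lam*⟪b, m⟫ + ‖m‖^2 := by
    have hnn : (0:ℝ) ≤ ‖(2*lam) • b - m‖^2 := sq_nonneg _
    have hexp : ‖(2*lam) • b - m‖^2 = (2*lam)^2*‖b‖^2 - 2*((2*lam)*⟪b, m⟫) + ‖m‖^2 := by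
      rw [norm_sub_sq_real, real_inner_smul_left, norm_smul]
      rw [Real.norm_eq_abs, abs_of_pos (by linarith : (0:ℝ) < 2*lam)]
      ring
    nlinarith [hexp ▸ hnn]
  -- scalar bound on ⟪b,m⟫
  have h4lam : (0:ℝ) < 4*lam := by linarith
  have hmb : ⟪b, m⟫ ≤ lam*‖b‖^2 + ‖m‖^2/(4*lam) := by
    have hstep : (⟪b, m⟫ - lam*‖b‖^2) * (4*lam) ≤ ‖m‖^2 := by nlinarith [h3]
    have := (le_div_iff₀ h4lam).mpr hstep
    linarith
  have s1 : μ*‖m‖^2 + μ^2*⟪b, w⟫ - μ^2*⟪b, m⟫ ≤ μ*⟪m, w⟫ := by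
    nlinarith [mul_nonneg hμ.le h1']
  have s2 : μ^2*(lam*‖b‖^2) ≤ μ^2*⟪b, w⟫ :=
    mul_le_mul_of_nonneg_left h2 (sq_nonneg μ)
  have s3 : μ^2*⟪b, m⟫ ≤ μ^2*(lam*‖b‖^2) + μ^2*(‖m‖^2/(4*lam)) := by
    have := mul_le_mul_of_nonneg_left hmb (sq_nonneg μ)
    linarith [this, (mul_add (μ^2) (lam*‖b‖^2) (‖m‖^2/(4*lam))) ▸ this]
  have hq : μ*(1 - μ/(4*lam))*‖m‖^2 = μ*‖m‖^2 - μ^2*(‖m‖^2/(4*lam)) := by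
    field_simp
  have key : (μ * (1 - μ / (4 * lam))) * ‖m‖^2 ≤ μ * ⟪m, w⟫ := by
    rw [hq]; linarith [s1, s2, s3]
  -- reduce goal to key
  have hmsmul : (μ⁻¹ • (x - px)) - (μ⁻¹ • (y - py)) = μ⁻¹ • m := by
    rw [hm]; module
  rw [hmsmul, real_inner_smul_left, norm_smul, Real.norm_eq_abs,
    abs_of_pos (inv_pos.mpr hμ), mul_pow]
  have hfin := mul_le_mul_of_nonneg_left key (sq_nonneg μ⁻¹)
  have hid : μ⁻¹^2 * (μ * ⟪m, w⟫) = μ⁻¹ * ⟪m, w⟫ := by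
    field_simp
  nlinarith [hfin, hid]
end

section
/- Let f, g : ℝ^d → ℝ ∪ {∞} be proper, lsc, convex, with g finite-valued and L₀-Lipschitz continuous, and suppose F = f + g is coercive. For each θ > 0 let S_θ = argmin(f + g_θ), where g_θ is the Moreau envelope of g. Then there exists C ≥ 0, independent of θ, such that sup_{z ∈ S_θ} ‖z‖ ≤ C for all θ ∈ (0, 1]. -/
theorem stmt_13 {d : ℕ} (f : EuclideanSpace ℝ (Fin d) → EReal)
    (g : EuclideanSpace ℝ (Fin d) → ℝ) (L₀ : ℝ)
    (hfproper : (∃ x, f x ≠ ⊤) ∧ ∀ x, f x ≠ ⊥)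
    (hflsc : LowerSemicontinuous f)
    (hfconv : ∀ x y : EuclideanSpace ℝ (Fin d), ∀ a b : ℝ, 0 ≤ a → 0 ≤ b → a + b = 1 →
      f (a • x + b • y) ≤ (a : EReal) * f x + (b : EReal) * f y)
    (hgconv : ConvexOn ℝ Set.univ g)
    (hgLip : ∀ x y, |g x - g y| ≤ L₀ * ‖x - y‖)
    -- F = f + g is coercive
    (hcoercive : Filter.Tendsto (fun x => f x + (g x : EReal))
      (Filter.comap norm Filter.atTop) Filter.atTop)
    (gθ : ℝ → EuclideanSpace ℝ (Fin d) → ℝ)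
    (hgθ : ∀ θ x, gθ θ x = ⨅ y : EuclideanSpace ℝ (Fin d),
      (g y + 1 / (2 * θ) * ‖x - y‖ ^ 2)) :
    ∃ C : ℝ, 0 ≤ C ∧ ∀ θ ∈ Set.Ioc (0 : ℝ) 1,
      ∀ z ∈ {z : EuclideanSpace ℝ (Fin d) |
        ∀ y, f z + (gθ θ z : EReal) ≤ f y + (gθ θ y : EReal)}, ‖z‖ ≤ C := by
  obtain ⟨⟨x₀, hx₀⟩, hbot⟩ := hfproper
  set B' : ℝ := (f x₀).toReal + g x₀ + L₀ ^ 2 / 2 with hB'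
  have hcoe : f x₀ = ((f x₀).toReal : EReal) := (EReal.coe_toReal hx₀ (hbot x₀)).symm
  -- extract a radius from coercivity
  have hev := Filter.tendsto_atTop.mp hcoercive ((B' + 1 : ℝ) : EReal)
  rw [Filter.eventually_comap] at hev
  rw [Filter.eventually_atTop] at hev
  obtain ⟨R, hR⟩ := hev
  refine ⟨max R 0, le_max_right _ _, ?_⟩
  rintro θ ⟨hθ0, hθ1⟩ z hz
  simp only [Set.mem_setOf_eq] at hz
  -- lower bound on the objective inside the infimum
  have hlb : ∀ x y : EuclideanSpace ℝ (Fin d),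
      g x - L₀ ^ 2 * θ / 2 ≤ g y + 1 / (2 * θ) * ‖x - y‖ ^ 2 := by
    intro x y
    have hlip : g x - g y ≤ L₀ * ‖x - y‖ := (abs_le.mp (hgLip x y)).2
    have hθ' : (0:ℝ) < 2 * θ := by linarith
    have key : 0 ≤ 1 / (2 * θ) * (‖x - y‖ - L₀ * θ) ^ 2 := by positivity
    have hinv : (2 * θ) * (1 / (2 * θ)) = 1 := by field_simp
    nlinarith [key, hinv, hlip, sq_nonneg (‖x - y‖ - L₀ * θ)]
  have hbdd : ∀ x, BddBelow (Set.range fun y => g y + 1 / (2 * θ) * ‖x - y‖ ^ 2) := by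
    intro x
    exact ⟨g x - L₀ ^ 2 * θ / 2, by rintro v ⟨y, rfl⟩; exact hlb x y⟩
  have hle : ∀ x, gθ θ x ≤ g x := by
    intro x
    rw [hgθ]
    have := ciInf_le (hbdd x) x
    simpa using this
  have hge : ∀ x, g x - L₀ ^ 2 * θ / 2 ≤ gθ θ x := by
    intro x
    rw [hgθ]
    exact le_ciInf (hlb x)
  -- g z ≤ gθ θ z + L₀²/2
  have hgz : g z ≤ gθ θ z + L₀ ^ 2 / 2 := by
    have := hge z
    nlinarith [sq_nonneg L₀]
  -- the chain of EReal inequalities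
  have h1 : f z + (gθ θ z : EReal) ≤ f x₀ + (g x₀ : EReal) := by
    refine le_trans (hz x₀) ?_
    exact add_le_add (le_refl _) (EReal.coe_le_coe_iff.mpr (hle x₀))
  have hchain : f z + (g z : EReal) ≤ ((B' : ℝ) : EReal) := by
    have s1 : f z + (g z : EReal) ≤ f z + ((gθ θ z + L₀ ^ 2 / 2 : ℝ) : EReal) :=
      add_le_add (le_refl _) (EReal.coe_le_coe_iff.mpr hgz)
    have s2 : f z + ((gθ θ z + L₀ ^ 2 / 2 : ℝ) : EReal)
        = (f z + (gθ θ z : EReal)) + ((L₀ ^ 2 / 2 : ℝ) : EReal) := by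
      rw [EReal.coe_add, add_assoc]
    have s3 : (f z + (gθ θ z : EReal)) + ((L₀ ^ 2 / 2 : ℝ) : EReal)
        ≤ (f x₀ + (g x₀ : EReal)) + ((L₀ ^ 2 / 2 : ℝ) : EReal) :=
      add_le_add h1 (le_refl _)
    have s4 : (f x₀ + (g x₀ : EReal)) + ((L₀ ^ 2 / 2 : ℝ) : EReal) = ((B' : ℝ) : EReal) := by
      rw [hcoe, hB']
      push_cast
      ring
    calc f z + (g z : EReal) ≤ _ := s1
      _ = _ := s2
      _ ≤ _ := s3
      _ = _ := s4
  -- conclude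
  by_contra hcon
  push_neg at hcon
  have hRz : R ≤ ‖z‖ := le_trans (le_max_left R 0) hcon.le
  have := hR ‖z‖ hRz z rfl
  have hfinal : ((B' + 1 : ℝ) : EReal) ≤ ((B' : ℝ) : EReal) := le_trans this hchain
  have := EReal.coe_le_coe_iff.mp hfinal
  linarith
end

section
/- Let f : ℝ^d → ℝ be convex and differentiable with argmin f ≠ ∅, and suppose f satisfies the global Łojasiewicz inequality with exponent q ∈ [0,1): μ(f(x) − min f)^q ≤ ‖∇f(x)‖ for all x with min f < f(x) < r. Then f satisfies the Hölderian error bound with exponent p = 1/(1−q): there exists γ > 0 such that f(x) − min f ≥ γ·dist(x, argmin f)^p for all x with min f ≤ f(x) ≤ r' for some r' > min f. -/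
open Metric Set Filter Topology

/-- One-sided derivative bound: if `F` has derivative `d` at `0` and
`F 0 - c * t ≤ F t` for small `t > 0`, then `-c ≤ d`. -/
lemma aux_right_deriv_ge {F : ℝ → ℝ} {d c δ : ℝ} (hδ : 0 < δ)
    (hF : HasDerivAt F d 0) (h : ∀ t, 0 < t → t < δ → F 0 - c * t ≤ F t) :
    -c ≤ d := by
  have hslope : Tendsto (slope F 0) (𝓝[>] (0:ℝ)) (𝓝 d) :=
    (hasDerivAt_iff_tendsto_slope.mp hF).mono_left
      (nhdsWithin_mono _ (fun t ht => ne_of_gt ht))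
  refine ge_of_tendsto hslope ?_
  filter_upwards [Ioo_mem_nhdsGT_of_mem (Set.left_mem_Ico.mpr hδ)] with t ht
  have ht0 : 0 < t := ht.1
  have h1 := h t ht.1 ht.2
  rw [slope_def_field, sub_zero, le_div_iff₀ ht0]
  nlinarith

theorem stmt_16 {d : ℕ} (f : EuclideanSpace ℝ (Fin d) → ℝ)
    (f' : EuclideanSpace ℝ (Fin d) → EuclideanSpace ℝ (Fin d)) (μ q r : ℝ)
    (hconv : ConvexOn ℝ Set.univ f)
    (hdiff : ∀ x, HasGradientAt f (f' x) x)
    (hq : 0 ≤ q) (hq1 : q < 1) (hμ : 0 < μ)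
    (xstar : EuclideanSpace ℝ (Fin d)) (hmin : ∀ y, f xstar ≤ f y)
    (hr : f xstar < r)
    (hLoj : ∀ x, f xstar < f x → f x < r → μ * (f x - f xstar) ^ q ≤ ‖f' x‖) :
    ∃ γ > (0 : ℝ), ∃ r' > f xstar, ∀ x, f xstar ≤ f x → f x ≤ r' →
      γ * Metric.infDist x {y | ∀ z, f y ≤ f z} ^ (1 / (1 - q)) ≤ f x - f xstar := by
  set m := f xstar with hm
  set S : Set (EuclideanSpace ℝ (Fin d)) := {y | ∀ z, f y ≤ f z} with hSdef
  have hq1' : (0:ℝ) < 1 - q := by linarith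
  have hfc : Continuous f := by
    rw [continuous_iff_continuousAt]
    exact fun x => ((hdiff x).hasFDerivAt).continuousAt
  have hge : ∀ z, (0:ℝ) ≤ f z - m := fun z => sub_nonneg.mpr (hmin z)
  -- the key estimate
  have key : ∀ x, m < f x → f x < r →
      (1 - q) * μ * Metric.infDist x S ≤ (f x - m) ^ (1 - q) := by
    intro x hx1 hx2
    set D := Metric.infDist x S with hD
    have hDnn : 0 ≤ D := Metric.infDist_nonneg
    have hgx : (0:ℝ) < (f x - m) ^ (1 - q) :=
      Real.rpow_pos_of_pos (by linarith) _
    -- suffices to show the bound for every l < D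
    suffices H : ∀ l : ℝ, 0 < l → l < D → (1 - q) * μ * l ≤ (f x - m) ^ (1 - q) by
      rcases eq_or_lt_of_le hDnn with hD0 | hD0
      · rw [← hD0, mul_zero]; exact hgx.le
      by_contra hcon
      push_neg at hcon
      set l0 := (f x - m) ^ (1 - q) / ((1 - q) * μ) with hl0
      have hpos : 0 < (1 - q) * μ := mul_pos hq1' hμ
      have hl0D : l0 < D := by
        rw [hl0, div_lt_iff₀ hpos]
        nlinarith
      have hl0nn : 0 ≤ l0 := div_nonneg hgx.le hpos.le
      have h1 : 0 < (l0 + D) / 2 := by linarith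
      have h2 : (l0 + D) / 2 < D := by linarith
      have h3 : (1 - q) * μ * l0 < (1 - q) * μ * ((l0 + D) / 2) :=
        mul_lt_mul_of_pos_left (by linarith) hpos
      rw [hl0, mul_div_cancel₀ _ hpos.ne'] at h3
      linarith [H _ h1 h2]
    intro l hl hlD
    set g : EuclideanSpace ℝ (Fin d) → ℝ := fun z => (f z - m) ^ (1 - q) with hgdef
    have hgc : Continuous g :=
      (hfc.sub continuous_const).rpow_const (fun z => Or.inr hq1'.le)
    have hgnn : ∀ z, 0 ≤ g z := fun z => Real.rpow_nonneg (hge z) _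
    set c := g x / l with hc
    have hgxpos : 0 < g x := hgx
    have hcpos : 0 < c := div_pos hgxpos hl
    set h : EuclideanSpace ℝ (Fin d) → ℝ := fun z => g z + c * ‖z - x‖ with hhdef
    have hhc : Continuous h :=
      hgc.add (continuous_const.mul ((continuous_id.sub continuous_const).norm))
    have hxK : x ∈ Metric.closedBall x l := Metric.mem_closedBall_self hl.le
    obtain ⟨y₀, hy₀K, hy₀min⟩ :=
      (isCompact_closedBall x l).exists_isMinOn ⟨x, hxK⟩ hhc.continuousOn
    have hhx : h x = g x := by simp [hhdef]
    -- find an interior minimizer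
    obtain ⟨y, hymin, hyin⟩ :
        ∃ y, IsMinOn h (Metric.closedBall x l) y ∧ ‖y - x‖ < l := by
      rcases lt_or_eq_of_le (by simpa [Metric.mem_closedBall, dist_eq_norm] using hy₀K :
          ‖y₀ - x‖ ≤ l) with hlt | heq
      · exact ⟨y₀, hy₀min, hlt⟩
      · refine ⟨x, fun z hz => ?_, by simpa using hl⟩
        have h1 : h y₀ ≤ h z := hy₀min hz
        have h2 : h x ≤ h y₀ := by
          rw [hhx]
          calc g x = c * l := by rw [hc, div_mul_cancel₀ _ hl.ne']
          _ ≤ g y₀ + c * ‖y₀ - x‖ := by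
              rw [← heq]; linarith [hgnn y₀]
        exact h2.trans h1
    have hhyx : h y ≤ h x := hymin hxK
    have hgyx : g y ≤ g x := by
      have h0 : 0 ≤ c * ‖y - x‖ := mul_nonneg hcpos.le (norm_nonneg _)
      have hhyx' : g y + c * ‖y - x‖ ≤ g x + c * ‖x - x‖ := hhyx
      simp only [sub_self, norm_zero, mul_zero, add_zero] at hhyx'
      linarith
    have hfyx : f y ≤ f x := by
      by_contra hcon
      push_neg at hcon
      have hlt := Real.rpow_lt_rpow (hge x) (by linarith : f x - m < f y - m) hq1'
      have hgyx' : (f y - m) ^ (1 - q) ≤ (f x - m) ^ (1 - q) := hgyx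
      linarith
    have hyS : y ∉ S := by
      intro hyS
      have h1 : Metric.infDist x S ≤ dist x y :=
        Metric.infDist_le_dist_of_mem hyS
      rw [dist_eq_norm, norm_sub_rev] at h1
      rw [hD] at hlD
      linarith
    have hfy : m < f y := by
      rcases lt_or_eq_of_le (hmin y) with h1 | h1
      · exact h1
      · exact absurd (fun z => h1 ▸ hmin z : y ∈ S) hyS
    have hfyr : f y < r := by linarith
    have hKL := hLoj y hfy hfyr
    have hfy' : 0 < ‖f' y‖ :=
      lt_of_lt_of_le (mul_pos hμ (Real.rpow_pos_of_pos (by linarith) _)) hKL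
    set u := ‖f' y‖⁻¹ • f' y with hu
    have hunorm : ‖u‖ = 1 := by
      rw [hu, norm_smul, norm_inv, norm_norm, inv_mul_cancel₀ hfy'.ne']
    have h00 : y - (0:ℝ) • u = y := by simp
    -- derivative of F t = g (y - t • u) at 0
    have hcurve : HasDerivAt (fun t : ℝ => y - t • u) (-u) 0 := by
      simpa using HasDerivAt.const_sub y ((hasDerivAt_id (0:ℝ)).smul_const u)
    have hfd : HasDerivAt (fun t : ℝ => f (y - t • u)) (-‖f' y‖) 0 := by
      have hgrad : HasFDerivAt f
          ((InnerProductSpace.toDual ℝ (EuclideanSpace ℝ (Fin d))) (f' y))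
          ((fun t : ℝ => y - t • u) 0) := by
        simpa [h00] using (hdiff y).hasFDerivAt
      have hcomp := hgrad.comp_hasDerivAt 0 hcurve
      have hval : ((InnerProductSpace.toDual ℝ (EuclideanSpace ℝ (Fin d))) (f' y)) (-u)
          = -‖f' y‖ := by
        rw [InnerProductSpace.toDual_apply_apply, inner_neg_right, hu, real_inner_smul_right,
          real_inner_self_eq_norm_sq]
        field_simp
      rw [hval] at hcomp
      exact hcomp
    have hF : HasDerivAt (fun t : ℝ => (f (y - t • u) - m) ^ (1 - q))
        ((1 - q) * (f y - m) ^ (1 - q - 1) * (-‖f' y‖)) 0 := by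
      have hsub : HasDerivAt (fun t : ℝ => f (y - t • u) - m) (-‖f' y‖) 0 :=
        hfd.sub_const m
      have hne : f (y - (0:ℝ) • u) - m ≠ 0 := by rw [h00]; linarith
      have hres := hsub.rpow_const (p := 1 - q) (Or.inl hne)
      rw [h00] at hres
      convert hres using 1
      ring
    -- one-sided minimality
    have hδ : 0 < l - ‖y - x‖ := by linarith
    have hbound : ∀ t : ℝ, 0 < t → t < l - ‖y - x‖ →
        (fun t : ℝ => (f (y - t • u) - m) ^ (1 - q)) 0 - c * t
          ≤ (fun t : ℝ => (f (y - t • u) - m) ^ (1 - q)) t := by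
      intro t ht htδ
      have htri : ‖y - t • u - x‖ ≤ ‖y - x‖ + t := by
        calc ‖y - t • u - x‖ = ‖(y - x) + (-(t • u))‖ := by congr 1; abel
        _ ≤ ‖y - x‖ + ‖-(t • u)‖ := norm_add_le _ _
        _ = ‖y - x‖ + t := by
            rw [norm_neg, norm_smul, Real.norm_of_nonneg ht.le, hunorm, mul_one]
      have hmem : y - t • u ∈ Metric.closedBall x l := by
        rw [Metric.mem_closedBall, dist_eq_norm]
        linarith
      have hgval : g y + c * ‖y - x‖ ≤ g (y - t • u) + c * ‖y - t • u - x‖ :=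
        hymin hmem
      have hfin : g y - c * t ≤ g (y - t • u) := by nlinarith [hcpos.le]
      show (f (y - (0:ℝ) • u) - m) ^ (1 - q) - c * t ≤ (f (y - t • u) - m) ^ (1 - q)
      rw [h00]
      exact hfin
    have hder := aux_right_deriv_ge hδ hF hbound
    have hB : (0:ℝ) ≤ (f y - m) ^ (1 - q - 1) := Real.rpow_nonneg (by linarith) _
    have hkey : (1 - q) * (f y - m) ^ (1 - q - 1) * ‖f' y‖ ≤ c := by nlinarith [hder]
    have hfym : (0:ℝ) < f y - m := by linarith
    have hmul : (f y - m) ^ q * (f y - m) ^ (1 - q - 1) = 1 := by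
      rw [← Real.rpow_add hfym]; norm_num
    have hμq : (1 - q) * μ ≤ c := by
      calc (1 - q) * μ
          = (1 - q) * μ * ((f y - m) ^ q * (f y - m) ^ (1 - q - 1)) := by
            rw [hmul, mul_one]
        _ = (1 - q) * ((μ * (f y - m) ^ q) * (f y - m) ^ (1 - q - 1)) := by ring
        _ ≤ (1 - q) * (‖f' y‖ * (f y - m) ^ (1 - q - 1)) :=
            mul_le_mul_of_nonneg_left (mul_le_mul_of_nonneg_right hKL hB) hq1'.le
        _ = (1 - q) * (f y - m) ^ (1 - q - 1) * ‖f' y‖ := by ring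
        _ ≤ c := hkey
    rw [hc, le_div_iff₀ hl] at hμq
    exact hμq
  -- assemble
  refine ⟨((1 - q) * μ) ^ (1 / (1 - q)), Real.rpow_pos_of_pos (mul_pos hq1' hμ) _,
    (m + r) / 2, by linarith, ?_⟩
  intro x hx1 hx2
  rcases eq_or_lt_of_le hx1 with hxm | hxm
  · have hxS : x ∈ S := fun z => hxm ▸ hmin z
    rw [Metric.infDist_zero_of_mem hxS, Real.zero_rpow (by positivity), mul_zero]
    linarith
  · have hxr : f x < r := by linarith
    have hK := key x hxm hxr
    have hp : (0:ℝ) ≤ 1 / (1 - q) := by positivity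
    have hlhs : 0 ≤ (1 - q) * μ * Metric.infDist x S :=
      mul_nonneg (mul_pos hq1' hμ).le Metric.infDist_nonneg
    have hfin := Real.rpow_le_rpow hlhs hK hp
    rw [Real.mul_rpow (mul_pos hq1' hμ).le Metric.infDist_nonneg,
      ← Real.rpow_mul (hge x)] at hfin
    have hexp : (1 - q) * (1 / (1 - q)) = 1 := by field_simp
    rw [hexp, Real.rpow_one] at hfin
    exact hfin
end
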